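/- arXiv:1012.1129 — 3 statements merged into one kernel-verified Lean document; each statement's English description precedes it below -/
import Mathlib

section
/- For a uniform distribution on m urns, the expected number of throws until every urn has received at least one ball equals m·H_m, where H_m = 1 + 1/2 + ... + 1/m is the m-th harmonic number. -/
/-!
By inclusion–exclusion over the set of urns that are missed, the probability that `t` throws
leave some urn empty is `∑_{j=1}^m (-1)^(j+1) C(m,j) (1 - j/m)^t`. Summing these geometric series
over `t` gives `m ∑_{j=1}^m (-1)^(j+1) C(m,j) / j`, and this alternating sum is `H_m`, by
induction on `m` via Pascal's rule.
-/

open Finset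

section Surjections

variable {α β : Type*} [Fintype α] [DecidableEq α] [Fintype β] [DecidableEq β]

lemma card_inf_filter_forall_ne (T : Finset β) :
    #(T.inf fun b => ({f : α → β | ∀ a, f a ≠ b} : Finset (α → β)))
      = (Fintype.card β - #T) ^ Fintype.card α := by
  have hpi : (T.inf fun b => ({f : α → β | ∀ a, f a ≠ b} : Finset (α → β)))
      = Fintype.piFinset fun _ => Tᶜ := by
    ext f
    simp only [mem_inf, mem_filter, mem_univ, true_and, Fintype.mem_piFinset, mem_compl]
    exact ⟨fun h a ha => h _ ha a rfl, fun h b hb a hfa => h a (hfa ▸ hb)⟩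
  rw [hpi, Fintype.card_piFinset, prod_const, card_compl, card_univ]

theorem card_filter_surjective_eq_sum :
    (#{f : α → β | Function.Surjective f} : ℤ) = ∑ j ∈ range (Fintype.card β + 1),
      (-1 : ℤ) ^ j * (Fintype.card β).choose j * ((Fintype.card β - j) ^ Fintype.card α : ℕ) := by
  have hsurj : ({f : α → β | Function.Surjective f} : Finset (α → β))
      = univ.inf fun b => ({f : α → β | ∀ a, f a ≠ b} : Finset (α → β))ᶜ := by
    ext f
    simp only [mem_filter, mem_univ, true_and, mem_inf, mem_compl, not_forall, not_not,
      true_implies]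
    rfl
  rw [hsurj, inclusion_exclusion_card_inf_compl]
  simp only [card_inf_filter_forall_ne]
  rw [sum_powerset_apply_card
    (fun j => (-1 : ℤ) ^ j * ((Fintype.card β - j) ^ Fintype.card α : ℕ))]
  refine sum_congr rfl fun j _ => ?_
  simp only [card_univ, nsmul_eq_mul]
  ring

theorem card_filter_not_surjective_eq_sum :
    (#{f : α → β | ¬ Function.Surjective f} : ℤ) = ∑ j ∈ range (Fintype.card β),
      (-1 : ℤ) ^ j * (Fintype.card β).choose (j + 1)
        * ((Fintype.card β - (j + 1)) ^ Fintype.card α : ℕ) := by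
  have hsplit : (#{f : α → β | Function.Surjective f} : ℤ)
      + #{f : α → β | ¬ Function.Surjective f} = Fintype.card β ^ Fintype.card α := by
    exact_mod_cast (card_filter_add_card_filter_not (s := univ) Function.Surjective).trans
      Fintype.card_fun
  rw [card_filter_surjective_eq_sum, sum_range_succ'] at hsplit
  simp only [pow_succ, pow_zero, one_mul, mul_neg_one, neg_mul, sum_neg_distrib,
    Nat.choose_zero_right, Nat.sub_zero] at hsplit
  push_cast at hsplit ⊢
  linear_combination hsplit

end Surjections

lemma alternating_sum_range_choose_succ_eq_one (n : ℕ) :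
    ∑ k ∈ range (n + 1), (-1 : ℤ) ^ k * (n + 1).choose (k + 1) = 1 := by
  have h := Int.alternating_sum_range_choose_of_ne n.succ_ne_zero
  rw [sum_range_succ'] at h
  simp only [pow_succ, mul_neg_one, neg_mul, sum_neg_distrib, pow_zero, Nat.choose_zero_right,
    Nat.cast_one, mul_one] at h
  linarith

theorem alternating_sum_choose_div_eq_harmonic {K : Type*} [Field K] [CharZero K] (n : ℕ) :
    ∑ k ∈ range n, (-1 : K) ^ k * n.choose (k + 1) / (k + 1)
      = ∑ i ∈ range n, 1 / ((i : K) + 1) := by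
  induction n with
  | zero => simp
  | succ n ih =>
    have hpascal : ∀ k : ℕ, ((n + 1).choose (k + 1) : K) / (k + 1)
        = n.choose (k + 1) / (k + 1) + (n + 1).choose (k + 1) / (n + 1) := by
      intro k
      have h : ((n + 1 : ℕ) : K) * n.choose k = (n + 1).choose (k + 1) * (k + 1 : ℕ) := by
        exact_mod_cast Nat.add_one_mul_choose_eq n k
      have hp : ((n + 1).choose (k + 1) : K) = n.choose k + n.choose (k + 1) := by
        exact_mod_cast Nat.choose_succ_succ' n k
      push_cast at h
      field_simp
      linear_combination (↑n + 1) * hp + h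
    have halt : ∑ k ∈ range (n + 1), (-1 : K) ^ k * (n + 1).choose (k + 1) = 1 := by
      exact_mod_cast alternating_sum_range_choose_succ_eq_one n
    calc ∑ k ∈ range (n + 1), (-1 : K) ^ k * (n + 1).choose (k + 1) / (k + 1)
        = ∑ k ∈ range (n + 1), (-1 : K) ^ k * n.choose (k + 1) / (k + 1)
          + (∑ k ∈ range (n + 1), (-1 : K) ^ k * (n + 1).choose (k + 1)) / (n + 1) := by
          rw [sum_div, ← sum_add_distrib]
          refine sum_congr rfl fun k _ => ?_
          rw [mul_div_assoc, hpascal]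
          ring
      _ = ∑ i ∈ range (n + 1), 1 / ((i : K) + 1) := by
          rw [halt, sum_range_succ, Nat.choose_succ_self, ih, sum_range_succ]
          simp

lemma hasSum_geometric_sub_div {m k : ℕ} (hk : 0 < k) (hkm : k ≤ m) :
    HasSum (fun t : ℕ => (((m - k : ℕ) : ℝ) / m) ^ t) (m / k) := by
  have hm : (0 : ℝ) < m := by exact_mod_cast hk.trans_le hkm
  have hr : (((m - k : ℕ) : ℝ) / m) = 1 - k / m := by
    rw [Nat.cast_sub hkm]
    field_simp
  convert hasSum_geometric_of_lt_one (r := ((m - k : ℕ) : ℝ) / m) (by positivity) ?_ using 1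
  · rw [hr, sub_sub_cancel, inv_div]
  · rw [hr]
    have : (0 : ℝ) < k := by exact_mod_cast hk
    linarith [div_pos this hm]

theorem stmt1_general (m : ℕ) :
    ∑' t : ℕ,
      ((Finset.univ.filter (fun v : Fin t → Fin m => ¬ Function.Surjective v)).card : ℝ)
        / (m : ℝ) ^ t
      = (m : ℝ) * ∑ i ∈ Finset.range m, (1 : ℝ) / (i + 1) := by
  have hterm : ∀ t : ℕ, (#{v : Fin t → Fin m | ¬ Function.Surjective v} : ℝ) / (m : ℝ) ^ t
      = ∑ j ∈ range m, (-1 : ℝ) ^ j * m.choose (j + 1) * (((m - (j + 1) : ℕ) : ℝ) / m) ^ t := by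
    intro t
    have hcount := card_filter_not_surjective_eq_sum (α := Fin t) (β := Fin m)
    simp only [Fintype.card_fin] at hcount
    rw [← Int.cast_natCast, hcount]
    push_cast
    rw [sum_div]
    refine sum_congr rfl fun j _ => ?_
    rw [div_pow, mul_div_assoc]
  have hgeom : HasSum (fun t : ℕ => ∑ j ∈ range m,
        (-1 : ℝ) ^ j * m.choose (j + 1) * (((m - (j + 1) : ℕ) : ℝ) / m) ^ t)
      (∑ j ∈ range m, (-1 : ℝ) ^ j * m.choose (j + 1) * (m / (j + 1 : ℕ))) :=
    hasSum_sum fun j hj =>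
      (hasSum_geometric_sub_div j.succ_pos (mem_range.1 hj)).mul_left _
  rw [tsum_congr hterm, hgeom.tsum_eq, ← alternating_sum_choose_div_eq_harmonic, mul_sum]
  refine sum_congr rfl fun j _ => ?_
  push_cast
  ring

/-- For the uniform distribution on `m` urns, the expected number of throws
until every urn has received at least one ball equals `m * H_m`, where
`H_m = 1 + 1/2 + ... + 1/m`. The expected waiting time is expressed as
`∑_{t ≥ 0} P(C > t)`, where `P(C > t)` is the probability that the first `t`
uniform throws do not cover all urns, i.e. the proportion of non-surjective
maps `Fin t → Fin m`. -/
theorem stmt1 (m : ℕ) (hm : 0 < m) :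
    ∑' t : ℕ,
      ((Finset.univ.filter (fun v : Fin t → Fin m => ¬ Function.Surjective v)).card : ℝ)
        / (m : ℝ) ^ t
      = (m : ℝ) * ∑ i ∈ Finset.range m, (1 : ℝ) / (i + 1) :=
  stmt1_general m
end

section
/- Let p_1,...,p_m be a probability distribution and define λ(t) = Π_{i=1}^m (1 + p_i t). Then the expected waiting time of the first collision (first birthday) equals ∫_0^∞ λ(t)·e^{−t} dt. -/
open MeasureTheory

lemma gamma_pow_integrable (n : ℕ) :
    IntegrableOn (fun x : ℝ => x ^ n * Real.exp (-x)) (Set.Ioi 0) := by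
  have h := Real.GammaIntegral_convergent (s := (n : ℝ) + 1) (by positivity)
  refine h.congr_fun (fun x hx => ?_) measurableSet_Ioi
  simp only [add_sub_cancel_right]
  rw [Real.rpow_natCast]
  ring

lemma gamma_pow_integral (n : ℕ) :
    ∫ x in Set.Ioi (0 : ℝ), x ^ n * Real.exp (-x) = (Nat.factorial n) := by
  have h := Real.Gamma_eq_integral (s := (n : ℝ) + 1) (by positivity)
  rw [Real.Gamma_nat_eq_factorial] at h
  rw [h]
  refine setIntegral_congr_fun measurableSet_Ioi fun x hx => ?_
  simp only [add_sub_cancel_right]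
  rw [Real.rpow_natCast]
  ring

lemma fiber_card (m t : ℕ) (S : Finset (Fin m)) (hS : S.card = t) :
    (Finset.univ.filter (fun v : Fin t → Fin m =>
      Function.Injective v ∧ Finset.image v Finset.univ = S)).card = (Nat.factorial t) := by
  classical
  have key : ∀ v : Fin t → Fin m, (Function.Injective v ∧ Finset.image v Finset.univ = S)
      ↔ (Function.Injective v ∧ ∀ j, v j ∈ S) := by
    intro v
    constructor
    · rintro ⟨h1, h2⟩
      exact ⟨h1, fun j => h2 ▸ Finset.mem_image_of_mem v (Finset.mem_univ j)⟩
    · rintro ⟨h1, h2⟩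
      refine ⟨h1, Finset.eq_of_subset_of_card_le ?_ ?_⟩
      · intro i hi
        obtain ⟨j, _, rfl⟩ := Finset.mem_image.mp hi
        exact h2 j
      · rw [hS, Finset.card_image_of_injective _ h1, Finset.card_univ, Fintype.card_fin]
  simp only [key]
  rw [← Fintype.card_subtype]
  have e : {v : Fin t → Fin m // Function.Injective v ∧ ∀ j, v j ∈ S} ≃ (Fin t ↪ {x // x ∈ S}) :=
    { toFun := fun v => ⟨fun j => ⟨v.1 j, v.2.2 j⟩, fun a b hab => v.2.1 (by
        simpa [Subtype.ext_iff] using hab)⟩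
      invFun := fun e => ⟨fun j => (e j : Fin m),
        ⟨fun a b hab => e.injective (Subtype.ext hab), fun j => (e j).2⟩⟩
      left_inv := fun v => rfl
      right_inv := fun e => by ext j; rfl }
  rw [Fintype.card_congr e, Fintype.card_embedding_eq, Fintype.card_fin, Fintype.card_coe, hS,
    Nat.descFactorial_self]

lemma keyC (m t : ℕ) (p : Fin m → ℝ) :
    ∑ v ∈ Finset.univ.filter (fun v : Fin t → Fin m => Function.Injective v), ∏ j, p (v j)
    = ∑ S ∈ Finset.powersetCard t (Finset.univ : Finset (Fin m)), ((Nat.factorial t) : ℝ) * ∏ i ∈ S, p i := by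
  classical
  rw [← Finset.sum_fiberwise_of_maps_to
    (g := fun v : Fin t → Fin m => Finset.image v Finset.univ)
    (t := Finset.powersetCard t (Finset.univ : Finset (Fin m)))
    (fun v hv => by
      rw [Finset.mem_powersetCard]
      refine ⟨Finset.subset_univ _, ?_⟩
      rw [Finset.card_image_of_injective _ (Finset.mem_filter.mp hv).2, Finset.card_univ,
        Fintype.card_fin])]
  refine Finset.sum_congr rfl fun S hS => ?_
  have hScard : S.card = t := (Finset.mem_powersetCard.mp hS).2
  have hconst : ∀ v ∈ (Finset.univ.filter
      (fun v : Fin t → Fin m => Function.Injective v)).filter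
      (fun v => Finset.image v Finset.univ = S),
      ∏ j, p (v j) = ∏ i ∈ S, p i := by
    intro v hv
    simp only [Finset.mem_filter, Finset.mem_univ, true_and] at hv
    rw [← hv.2, Finset.prod_image (fun a _ b _ hab => hv.1 hab)]
  rw [Finset.sum_congr rfl hconst, Finset.sum_const, Finset.filter_filter, fiber_card m t S hScard,
    nsmul_eq_mul]


/-- For a probability distribution `p 1, ..., p m`, with
`λ(t) = ∏_{i=1}^m (1 + p i * t)`, the expected waiting time of the first collision
(first birthday) equals `∫_0^∞ λ(t) e^{-t} dt`. The expected waiting time is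
expressed as `∑_{t ≥ 0} P(B > t)` where `P(B > t)` is the probability that the
first `t` independent throws (sequence `v` having probability `∏ j, p (v j)`)
all land in distinct urns, i.e. `v` is injective. -/
theorem stmt4 (m : ℕ) (p : Fin m → ℝ)
    (hp : ∀ i, 0 ≤ p i) (hsum : ∑ i, p i = 1) :
    ∑' t : ℕ,
        ∑ v ∈ Finset.univ.filter (fun v : Fin t → Fin m => Function.Injective v),
          ∏ j, p (v j)
      = ∫ t in Set.Ioi (0 : ℝ), (∏ i, (1 + p i * t)) * Real.exp (-t) := by
  classical
  -- RHS integrand expansion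
  have hD : ∀ x : ℝ, (∏ i, (1 + p i * x)) * Real.exp (-x)
      = ∑ S ∈ (Finset.univ : Finset (Fin m)).powerset,
          (∏ i ∈ S, p i) * (x ^ S.card * Real.exp (-x)) := by
    intro x
    have : (∏ i, (1 + p i * x)) = ∑ S ∈ (Finset.univ : Finset (Fin m)).powerset,
        (∏ i ∈ S, p i) * x ^ S.card := by
      have := Finset.prod_add (fun i : Fin m => p i * x) (fun _ => (1 : ℝ)) Finset.univ
      simp only [Finset.prod_const_one, mul_one, Finset.prod_mul_distrib,
        Finset.prod_const] at this
      rw [← this]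
      exact Finset.prod_congr rfl fun i _ => by ring
    rw [this, Finset.sum_mul]
    exact Finset.sum_congr rfl fun S _ => by ring
  have hRHS : ∫ t in Set.Ioi (0 : ℝ), (∏ i, (1 + p i * t)) * Real.exp (-t)
      = ∑ S ∈ (Finset.univ : Finset (Fin m)).powerset, (∏ i ∈ S, p i) * (Nat.factorial S.card) := by
    rw [show (fun t : ℝ => (∏ i, (1 + p i * t)) * Real.exp (-t))
        = fun t => ∑ S ∈ (Finset.univ : Finset (Fin m)).powerset,
            (∏ i ∈ S, p i) * (t ^ S.card * Real.exp (-t)) from funext hD]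
    rw [integral_finset_sum _ (fun S _ => ((gamma_pow_integrable S.card).const_mul _))]
    refine Finset.sum_congr rfl fun S _ => ?_
    rw [MeasureTheory.integral_const_mul, gamma_pow_integral]
  rw [hRHS]
  rw [Finset.sum_powerset]
  have hcard : (Finset.univ : Finset (Fin m)).card = m := by
    rw [Finset.card_univ, Fintype.card_fin]
  rw [hcard]
  rw [tsum_eq_sum (s := Finset.range (m + 1)) ?_]
  · refine Finset.sum_congr rfl fun t _ => ?_
    rw [keyC]
    refine Finset.sum_congr rfl fun S hS => ?_
    rw [(Finset.mem_powersetCard.mp hS).2]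
    ring
  · intro t ht
    have htm : m < t := by
      by_contra h
      exact ht (Finset.mem_range.mpr (by omega))
    have : Finset.univ.filter (fun v : Fin t → Fin m => Function.Injective v) = ∅ := by
      refine Finset.filter_false_of_mem fun v _ hv => ?_
      have := Fintype.card_le_of_injective v hv
      simp only [Fintype.card_fin] at this
      omega
    rw [this, Finset.sum_empty]
end

section
/- Let p_1,...,p_m be a probability distribution with all p_i > 0, λ(t) = Π_{i=1}^m (1 + p_i t), and τ > 0. Then ∫_τ^∞ λ(t)·e^{−t} dt ≤ λ(τ)·e^{−τ}/B(τ), where B(τ) = Σ_{i=1}^m p_i^2·τ/(1 + p_i·τ). -/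
open MeasureTheory

private noncomputable def g (m : ℕ) (p : Fin m → ℝ) (τ B t : ℝ) : ℝ :=
  (∏ i, (1 + p i * τ)) * Real.exp (-τ) * Real.exp (-(B * (t - τ)))

/-- Let `p 1, ..., p m` be a probability distribution with all `p i > 0`,
`λ(t) = ∏_{i=1}^m (1 + p i * t)`, and `τ > 0`. Then
`∫_τ^∞ λ(t) e^{-t} dt ≤ λ(τ) e^{-τ} / B(τ)`, where
`B(τ) = ∑ i, p i ^ 2 * τ / (1 + p i * τ)`. -/
theorem stmt6 (m : ℕ) (hm : 0 < m) (p : Fin m → ℝ)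
    (hp : ∀ i, 0 < p i) (hsum : ∑ i, p i = 1) (τ : ℝ) (hτ : 0 < τ) :
    ∫ t in Set.Ioi τ, (∏ i, (1 + p i * t)) * Real.exp (-t)
      ≤ (∏ i, (1 + p i * τ)) * Real.exp (-τ)
          / (∑ i, (p i) ^ 2 * τ / (1 + p i * τ)) := by
  set B : ℝ := ∑ i, (p i) ^ 2 * τ / (1 + p i * τ) with hBdef
  have hden : ∀ i, 0 < 1 + p i * τ := fun i => by nlinarith [hp i]
  have hB : 0 < B := by
    apply Finset.sum_pos
    · intro i _
      have := hp i
      have := hden i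
      positivity
    · haveI := Fin.pos_iff_nonempty.mp hm
      exact Finset.univ_nonempty
  -- key: ∑ p i / (1 + p i τ) = 1 - B
  clear_value B
  have hsB : ∑ i, p i / (1 + p i * τ) = 1 - B := by
    have : ∀ i, p i / (1 + p i * τ) = p i - (p i) ^ 2 * τ / (1 + p i * τ) := by
      intro i
      have hne := (hden i).ne'
      field_simp
      ring
    rw [Finset.sum_congr rfl fun i _ => this i, Finset.sum_sub_distrib, hsum, hBdef]
  -- the dominating function
  have hgdef : ∀ t : ℝ, g m p τ B t
      = (∏ i, (1 + p i * τ)) * Real.exp (-τ) * Real.exp (-(B * (t - τ))) := fun t => rfl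
  -- pointwise bound on Ioi τ
  have hpt : ∀ t ∈ Set.Ioi τ, (∏ i, (1 + p i * t)) * Real.exp (-t) ≤ g m p τ B t := by
    intro t ht
    have htτ : τ ≤ t := le_of_lt ht
    have hprod : (∏ i, (1 + p i * t))
        ≤ (∏ i, (1 + p i * τ)) * Real.exp ((1 - B) * (t - τ)) := by
      have h1 : ∀ i ∈ Finset.univ, (0:ℝ) ≤ 1 + p i * τ ∧
          1 + p i * t ≤ (1 + p i * τ) * Real.exp (p i * (t - τ) / (1 + p i * τ)) := by
        intro i _
        refine ⟨(hden i).le, ?_⟩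
        have hx : p i * (t - τ) / (1 + p i * τ) + 1
            ≤ Real.exp (p i * (t - τ) / (1 + p i * τ)) := Real.add_one_le_exp _
        have := mul_le_mul_of_nonneg_left hx (hden i).le
        calc 1 + p i * t = (1 + p i * τ) * (p i * (t - τ) / (1 + p i * τ) + 1) := by
              have hne := (hden i).ne'
              field_simp; ring
          _ ≤ (1 + p i * τ) * Real.exp (p i * (t - τ) / (1 + p i * τ)) := this
      calc (∏ i, (1 + p i * t))
          ≤ ∏ i, (1 + p i * τ) * Real.exp (p i * (t - τ) / (1 + p i * τ)) := by
            apply Finset.prod_le_prod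
            · intro i _
              have := hp i; nlinarith
            · exact fun i hi => (h1 i hi).2
        _ = (∏ i, (1 + p i * τ)) * Real.exp (∑ i, p i * (t - τ) / (1 + p i * τ)) := by
            rw [Finset.prod_mul_distrib, Real.exp_sum]
        _ = (∏ i, (1 + p i * τ)) * Real.exp ((1 - B) * (t - τ)) := by
            congr 1
            rw [← hsB, Finset.sum_mul]
            exact congrArg Real.exp (Finset.sum_congr rfl fun i _ => by ring)
    have hexp : Real.exp ((1 - B) * (t - τ)) * Real.exp (-t)
        = Real.exp (-τ) * Real.exp (-(B * (t - τ))) := by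
      rw [← Real.exp_add, ← Real.exp_add]; ring_nf
    calc (∏ i, (1 + p i * t)) * Real.exp (-t)
        ≤ (∏ i, (1 + p i * τ)) * Real.exp ((1 - B) * (t - τ)) * Real.exp (-t) := by
          exact mul_le_mul_of_nonneg_right hprod (Real.exp_pos (-t)).le
      _ = g m p τ B t := by rw [hgdef t, mul_assoc, mul_assoc, hexp]
  -- integrability of g
  have hgint : IntegrableOn (g m p τ B) (Set.Ioi τ) := by
    have : IntegrableOn (fun t : ℝ => Real.exp (-(B * t))) (Set.Ioi τ) := by
      have h0 := exp_neg_integrableOn_Ioi τ hB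
      simpa [neg_mul] using h0
    have h2 : IntegrableOn (fun t : ℝ => Real.exp (-(B * (t - τ)))) (Set.Ioi τ) := by
      have hc := this.const_mul (Real.exp (B * τ))
      refine hc.congr ?_
      filter_upwards with x
      rw [← Real.exp_add]
      congr 1
      ring
    exact (h2.const_mul _)
  -- integrability of f
  have hfnn : ∀ t ∈ Set.Ioi τ, 0 ≤ (∏ i, (1 + p i * t)) * Real.exp (-t) := by
    intro t ht
    have htτ : τ < t := ht
    have : 0 ≤ ∏ i, (1 + p i * t) := Finset.prod_nonneg fun i _ => by
      have := hp i; nlinarith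
    positivity
  have hfint : IntegrableOn (fun t => (∏ i, (1 + p i * t)) * Real.exp (-t)) (Set.Ioi τ) := by
    apply Integrable.mono' hgint
    · apply Continuous.aestronglyMeasurable
      exact (continuous_finset_prod _ fun i _ => by continuity).mul (by continuity)
    · filter_upwards [ae_restrict_mem measurableSet_Ioi] with t ht
      rw [Real.norm_eq_abs, abs_of_nonneg (hfnn t ht)]
      exact hpt t ht
  -- compute ∫ g
  have hgval : ∫ t in Set.Ioi τ, g m p τ B t
      = (∏ i, (1 + p i * τ)) * Real.exp (-τ) / B := by
    simp only [hgdef]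
    rw [MeasureTheory.integral_const_mul]
    have h3 : ∫ t in Set.Ioi τ, Real.exp (-(B * (t - τ)))
        = Real.exp (B * τ) * ∫ t in Set.Ioi τ, Real.exp (-(B * t)) := by
      rw [← MeasureTheory.integral_const_mul]
      apply setIntegral_congr_fun measurableSet_Ioi
      intro x _
      simp only [← Real.exp_add]
      congr 1
      ring
    have h4 : ∫ t in Set.Ioi τ, Real.exp (-(B * t)) = B⁻¹ * Real.exp (-(B * τ)) := by
      have := integral_comp_mul_left_Ioi (fun x => Real.exp (-x)) τ hB
      simp only [smul_eq_mul] at this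
      rw [this, integral_exp_neg_Ioi]
    rw [h3, h4]
    have he : Real.exp (B * τ) * (B⁻¹ * Real.exp (-(B * τ))) = B⁻¹ := by
      rw [mul_comm, mul_assoc, ← Real.exp_add]
      simp
    rw [he, div_eq_mul_inv]
  calc ∫ t in Set.Ioi τ, (∏ i, (1 + p i * t)) * Real.exp (-t)
      ≤ ∫ t in Set.Ioi τ, g m p τ B t := by
        apply setIntegral_mono_on hfint hgint measurableSet_Ioi hpt
    _ = (∏ i, (1 + p i * τ)) * Real.exp (-τ) / B := hgval
end
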